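/- arXiv:1306.4088 — 2 statements merged into one kernel-verified Lean document; each statement's English description precedes it below -/
import Mathlib

section
/- Let R be a ring and M a left R-module. If M is pure injective, then the canonical evaluation homomorphism σ_M : M → M^{++} into its double character module is a split monomorphism. -/
universe u

/-! Common definitions: character modules, purity, pure injectivity. -/

open MulOpposite


/-- The character group `M⁺ = Hom_ℤ(M, ℚ/ℤ)`. -/
def CharMod (M : Type u) [AddCommGroup M] : Type u := M →+ AddCircle (1 : ℚ)

instance (M : Type u) [AddCommGroup M] : AddCommGroup (CharMod M) :=
  inferInstanceAs (AddCommGroup (M →+ AddCircle (1 : ℚ)))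

instance (M : Type u) [AddCommGroup M] : FunLike (CharMod M) M (AddCircle (1 : ℚ)) :=
  inferInstanceAs (FunLike (M →+ AddCircle (1 : ℚ)) M (AddCircle (1 : ℚ)))

instance (M : Type u) [AddCommGroup M] :
    AddMonoidHomClass (CharMod M) M (AddCircle (1 : ℚ)) :=
  inferInstanceAs (AddMonoidHomClass (M →+ AddCircle (1 : ℚ)) M (AddCircle (1 : ℚ)))

/-- If `M` is a left `R`-module, `M⁺` is a right `R`-module via `(c • r) m = c (r • m)`. -/
instance CharMod.moduleOp (R : Type v) [Ring R] (M : Type u) [AddCommGroup M] [Module R M] :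
    Module Rᵐᵒᵖ (CharMod M) where
  smul r c := (c : M →+ AddCircle (1 : ℚ)).comp (DistribMulAction.toAddMonoidHom M r.unop)
  one_smul c := AddMonoidHom.ext fun m => congrArg c (one_smul R m)
  mul_smul r s c := AddMonoidHom.ext fun m => congrArg c (mul_smul s.unop r.unop m)
  smul_zero r := rfl
  smul_add r c d := rfl
  add_smul r s c := AddMonoidHom.ext fun m => by
    show c ((r.unop + s.unop) • m) = c (r.unop • m) + c (s.unop • m)
    rw [add_smul, map_add]
  zero_smul c := AddMonoidHom.ext fun m => by
    show c ((0 : R) • m) = 0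
    rw [zero_smul, map_zero]

@[simp] lemma CharMod.op_smul_apply {R : Type v} [Ring R] {M : Type u} [AddCommGroup M]
    [Module R M] (r : Rᵐᵒᵖ) (c : CharMod M) (m : M) : (r • c) m = c (r.unop • m) := rfl

/-- If `N` is a right `R`-module, `N⁺` is a left `R`-module via `(r • c) n = c (n • r)`. -/
instance CharMod.moduleUnop (R : Type v) [Ring R] (N : Type u) [AddCommGroup N] [Module Rᵐᵒᵖ N] :
    Module R (CharMod N) where
  smul r c := (c : N →+ AddCircle (1 : ℚ)).comp (DistribMulAction.toAddMonoidHom N (op r))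
  one_smul c := AddMonoidHom.ext fun n => congrArg c (one_smul Rᵐᵒᵖ n)
  mul_smul r s c := AddMonoidHom.ext fun n => by
    show c ((op (r * s)) • n) = c (op s • op r • n)
    rw [← mul_smul]; rfl
  smul_zero r := rfl
  smul_add r c d := rfl
  add_smul r s c := AddMonoidHom.ext fun n => by
    show c ((op (r + s)) • n) = c (op r • n) + c (op s • n)
    rw [show op (r + s) = op r + op s from rfl, add_smul, map_add]
  zero_smul c := AddMonoidHom.ext fun n => by
    show c ((op (0 : R)) • n) = 0
    rw [show op (0 : R) = (0 : Rᵐᵒᵖ) from rfl, zero_smul, map_zero]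

@[simp] lemma CharMod.unop_smul_apply {R : Type v} [Ring R] {N : Type u} [AddCommGroup N]
    [Module Rᵐᵒᵖ N] (r : R) (c : CharMod N) (n : N) : (r • c) n = c (op r • n) := rfl

/-- The dual `f⁺ : C⁺ → A⁺` of a map `f : A → C` of left `R`-modules. -/
def charDual {R : Type v} [Ring R] {A C : Type u} [AddCommGroup A] [Module R A]
    [AddCommGroup C] [Module R C] (f : A →ₗ[R] C) : CharMod C →ₗ[Rᵐᵒᵖ] CharMod A where
  toFun c := (c : C →+ AddCircle (1 : ℚ)).comp f.toAddMonoidHom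
  map_add' _ _ := rfl
  map_smul' r c := AddMonoidHom.ext fun a => (congrArg c (f.map_smul r.unop a)).symm

/-- The canonical evaluation map `σ_M : M → M⁺⁺`. -/
def charEval (R : Type v) [Ring R] (M : Type u) [AddCommGroup M] [Module R M] :
    M →ₗ[R] CharMod (CharMod M) where
  toFun m :=
    { toFun := fun c => c m
      map_zero' := rfl
      map_add' := fun _ _ => rfl }
  map_add' m m' := AddMonoidHom.ext fun c => c.map_add m m'
  map_smul' r m := AddMonoidHom.ext fun c => rfl

/-- A linear map `i : M → N` is a pure monomorphism if it is injective and every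
map from a finitely presented module to `N ⧸ im i` lifts to `N`, i.e. the short exact
sequence `0 → M → N → N ⧸ im i → 0` remains exact after applying `Hom(F, -)` for all
finitely presented `F`. -/
def IsPureMono {R : Type v} [Ring R] {M N : Type u} [AddCommGroup M] [Module R M]
    [AddCommGroup N] [Module R N] (i : M →ₗ[R] N) : Prop :=
  Function.Injective i ∧
    ∀ (F : Type u) [AddCommGroup F] [Module R F], Module.FinitePresentation R F →
      ∀ g : F →ₗ[R] (N ⧸ LinearMap.range i),
        ∃ h : F →ₗ[R] N, (LinearMap.range i).mkQ.comp h = g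

/-- A module `E` is pure injective if every map to `E` extends along pure monomorphisms. -/
def IsPureInjective (R : Type v) [Ring R] (E : Type u) [AddCommGroup E] [Module R E] : Prop :=
  ∀ (M N : Type u) [AddCommGroup M] [Module R M] [AddCommGroup N] [Module R N]
    (i : M →ₗ[R] N), IsPureMono i →
      ∀ f : M →ₗ[R] E, ∃ g : N →ₗ[R] E, g.comp i = f

/-!
A character `χ` of `M^ι` is a family `(χ_t)` of characters of `M`. If `χ` kills every
`(u (s t))_t` with `u : R^κ → M`, the transposed characters `∑_t χ_t • s_tj` vanish, and then
`χ` also kills `(H (s t))_t` for every `H : R^κ → M⁺⁺`. Since characters separate points from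
subgroups, an interpolation problem `u (s t) = m t` (finitely many `t`) that is solvable after
applying `σ_M` is already solvable in `M`. Presenting a finitely presented `F` as `R^n` modulo
finitely many relations `s`, this says that maps `F → M⁺⁺ / σ_M M` lift to `M⁺⁺`: `σ_M` is a pure
monomorphism, and pure injectivity extends `id_M` along it.
-/

theorem AddSubgroup.exists_character_eq_zero_of_notMem {B : Type*} [AddCommGroup B]
    {A : AddSubgroup B} {b : B} (hb : b ∉ A) :
    ∃ c : CharacterModule B, (∀ a ∈ A, c a = 0) ∧ c b ≠ 0 := by
  have hb' : (QuotientAddGroup.mk b : B ⧸ A) ≠ 0 := by rwa [Ne, QuotientAddGroup.eq_zero_iff]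
  obtain ⟨c, hc⟩ := CharacterModule.exists_character_apply_ne_zero_of_ne_zero hb'
  refine ⟨(c : B ⧸ A →+ AddCircle (1 : ℚ)).comp (QuotientAddGroup.mk' A), fun a ha => ?_, hc⟩
  change c (QuotientAddGroup.mk a) = 0
  rw [(QuotientAddGroup.eq_zero_iff a).mpr ha, map_zero]

theorem LinearMap.exists_comp_eq_of_ker_le {R P F X : Type*} [Ring R] [AddCommGroup P]
    [Module R P] [AddCommGroup F] [Module R F] [AddCommGroup X] [Module R X] {π : P →ₗ[R] F}
    (hπ : Function.Surjective π) {f : P →ₗ[R] X} (h : LinearMap.ker π ≤ LinearMap.ker f) :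
    ∃ g : F →ₗ[R] X, g ∘ₗ π = f :=
  ⟨(LinearMap.ker π).liftQ f h ∘ₗ (π.quotKerEquivOfSurjective hπ).symm.toLinearMap,
    LinearMap.ext fun x => by simp⟩

theorem CharMod.sum_apply {N : Type u} [AddCommGroup N] {ι : Type*} (s : Finset ι)
    (c : ι → CharMod N) (x : N) : (∑ t ∈ s, c t) x = ∑ t ∈ s, c t x :=
  AddMonoidHom.finsetSum_apply c s x

theorem CharMod.sum_linearMap_apply {R : Type*} [Ring R] {N : Type u} [AddCommGroup N]
    [Module Rᵐᵒᵖ N] {ι κ : Type*} [Fintype ι] [Fintype κ] [DecidableEq κ]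
    (H : (κ → R) →ₗ[R] CharMod N) (s : ι → κ → R) (χ : ι → N) :
    ∑ t, H (s t) (χ t) = ∑ j, H (Pi.single j 1) (∑ t, op (s t j) • χ t) := by
  have hH : ∀ v, H v = ∑ j, v j • H (Pi.single j 1) := fun v => by
    conv_lhs => rw [← Finset.univ_sum_single v]
    rw [map_sum]
    refine Finset.sum_congr rfl fun j _ => ?_
    rw [← map_smul, ← Pi.single_smul', smul_eq_mul, mul_one]
  calc ∑ t, H (s t) (χ t) = ∑ t, ∑ j, H (Pi.single j 1) (op (s t j) • χ t) :=
        Finset.sum_congr rfl fun t _ => by rw [hH (s t), CharMod.sum_apply]; rfl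
    _ = _ := by rw [Finset.sum_comm]; simp only [map_sum]

section Evaluation

variable {R : Type u} [Ring R] {M : Type u} [AddCommGroup M] [Module R M]

theorem charEval_injective : Function.Injective (charEval R M) := fun a b h => by
  rw [← sub_eq_zero]
  refine CharacterModule.eq_zero_of_character_apply fun c => ?_
  rw [map_sub, sub_eq_zero]
  exact DFunLike.congr_fun h (c : CharMod M)

theorem exists_linearMap_apply_eq_of_apply_eq_charEval {ι κ : Type*} [Fintype ι] [Fintype κ]
    (s : ι → κ → R) (m : ι → M) (H : (κ → R) →ₗ[R] CharMod (CharMod M))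
    (hH : ∀ t, H (s t) = charEval R M (m t)) :
    ∃ u : (κ → R) →ₗ[R] M, ∀ t, u (s t) = m t := by
  classical
  let Φ : ((κ → R) →ₗ[R] M) →+ (ι → M) :=
    { toFun := fun u t => u (s t), map_zero' := rfl, map_add' := fun _ _ => rfl }
  by_contra hm
  obtain ⟨χ, hχΦ, hχm⟩ := AddSubgroup.exists_character_eq_zero_of_notMem (A := Φ.range) (b := m)
    fun ⟨u, hu⟩ => hm ⟨u, fun t => congrFun hu t⟩
  let χ' : ι → CharMod M := fun t =>
    (χ : (ι → M) →+ AddCircle (1 : ℚ)).comp (AddMonoidHom.single (fun _ => M) t)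
  have hχ : ∀ p : ι → M, χ p = ∑ t, χ' t (p t) := fun p => by
    conv_lhs => rw [← Finset.univ_sum_single p]
    exact map_sum χ _ _
  -- test `χ` on `u = (v ↦ v j • y)`
  have hdual : ∀ j, ∑ t, op (s t j) • χ' t = 0 := fun j => DFunLike.ext _ _ fun y => by
    change _ = (0 : AddCircle (1 : ℚ))
    rw [CharMod.sum_apply, ← hχΦ _ ⟨(LinearMap.proj j).smulRight y, rfl⟩, hχ]
    rfl
  apply hχm
  calc χ m = ∑ t, H (s t) (χ' t) := by simp only [hχ, hH]; rfl
    _ = 0 := by simp [CharMod.sum_linearMap_apply, hdual]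

theorem charEval_isPureMono : IsPureMono (charEval R M) := by
  refine ⟨charEval_injective, fun F _ _ _ g => ?_⟩
  obtain ⟨n, π, hπ⟩ := Module.Finite.exists_fin' R F
  obtain ⟨S, hS⟩ := Module.FinitePresentation.fg_ker π hπ
  obtain ⟨H, hH⟩ := Module.projective_lifting_property (LinearMap.range (charEval R M)).mkQ
    (g ∘ₗ π) (Submodule.mkQ_surjective _)
  have hrel : ∀ s : S, H s ∈ LinearMap.range (charEval R M) := fun s => by
    have hs : π s = 0 := LinearMap.mem_ker.mp (hS ▸ Submodule.subset_span s.2)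
    rw [← Submodule.Quotient.mk_eq_zero, ← Submodule.mkQ_apply, ← LinearMap.comp_apply, hH,
      LinearMap.comp_apply, hs, map_zero]
  choose m hm using hrel
  obtain ⟨u, hu⟩ := exists_linearMap_apply_eq_of_apply_eq_charEval
    (fun s : S => (s : Fin n → R)) m H fun s => (hm s).symm
  obtain ⟨h, hh⟩ := LinearMap.exists_comp_eq_of_ker_le hπ (f := H - charEval R M ∘ₗ u) <| by
    rw [← hS, Submodule.span_le]
    intro s hs
    simp [hu ⟨s, hs⟩, hm ⟨s, hs⟩]
  refine ⟨h, (LinearMap.cancel_right hπ).mp ?_⟩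
  rw [LinearMap.comp_assoc, hh, LinearMap.comp_sub, hH, ← LinearMap.comp_assoc,
    LinearMap.range_mkQ_comp, LinearMap.zero_comp, sub_zero]

end Evaluation

/-- If `M` is a pure injective left `R`-module, then the canonical evaluation map
`σ_M : M → M⁺⁺` is a split monomorphism. -/
theorem stmt2 {R : Type u} [Ring R] {M : Type u} [AddCommGroup M] [Module R M]
    (hM : IsPureInjective R M) :
    ∃ α : CharMod (CharMod M) →ₗ[R] M, α.comp (charEval R M) = LinearMap.id :=
  hM M _ (charEval R M) charEval_isPureMono LinearMap.id
end

section
/- Let R be a ring, and let A, C be left R-modules with C pure injective. Let f : A → C be a monomorphism such that f^+ : C^+ → A^+ is a precover of A^+ with respect to the class of pure injective right R-modules. Then f is a pure injective preenvelope of A, i.e., a preenvelope with respect to the class of pure injective left R-modules. -/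
universe u

/-! Common definitions: character modules, purity, pure injectivity. -/

open MulOpposite


/-!
A pure monomorphism is the same as a monomorphism that reflects solvability of finite linear
systems. The character module `A⁺` is pure injective: a right-module map `P → A⁺` is a character
of the balanced tensor product `P ⊗_R A`, pure monomorphisms stay injective after `- ⊗_R A`
(a relation in `N ⊗_R A` involves finitely many elements of `N`, which a solution of a finite
system pulls back into `P`), and `ℚ/ℤ` is an injective abelian group. Hence the precover `f⁺`
admits a section `s : A⁺ → C⁺`. If a finite system with constants in `A`, solvable in `C`, had
no solution in `A`, a character of `A^κ` separating the constants from the solvable right-hand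
sides would give `χ_j ∈ A⁺` satisfying the transposed equations; `s` carries them to `C⁺`, where
evaluating on the solution in `C` gives `0`, a contradiction. So `f` is a pure monomorphism, and
maps into pure injective modules extend along it.
-/

open Finsupp LinearMap

section Solvability

variable {R : Type u} [Ring R] {A C : Type u} [AddCommGroup A] [Module R A]
  [AddCommGroup C] [Module R C]

/-- A finite system of linear equations over `A` with unknowns indexed by `ι` is encoded by the
finitely generated module `K` of left-hand sides `∑ₗ kₗ xₗ`; a family `y` in `C` solves it when
every `∑ₗ kₗ yₗ` lies in `A`, the right-hand sides being these values. -/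
def ReflectsSolvability (f : A →ₗ[R] C) : Prop :=
  ∀ (ι : Type u) [Finite ι] (K : Submodule R (ι →₀ R)), K.FG → ∀ y : ι → C,
    (∀ k ∈ K, linearCombination R y k ∈ range f) →
      ∃ x : ι → A, ∀ k ∈ K, f (linearCombination R x k) = linearCombination R y k

theorem IsPureMono.reflectsSolvability {f : A →ₗ[R] C} (hf : IsPureMono f) :
    ReflectsSolvability f := by
  intro ι _ K hK y hy
  have : Module.FinitePresentation R ((ι →₀ R) ⧸ K) :=
    Module.finitePresentation_of_surjective K.mkQ K.mkQ_surjective (by rwa [K.ker_mkQ])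
  let g : (ι →₀ R) ⧸ K →ₗ[R] C ⧸ range f := K.liftQ ((range f).mkQ ∘ₗ linearCombination R y)
    fun k hk => by simpa using hy k hk
  obtain ⟨h, hh⟩ := hf.2 _ this g
  have hlift : ∀ l, ∃ a, f a = y l - h (K.mkQ (single l 1)) := by
    intro l
    have hl := LinearMap.congr_fun hh (K.mkQ (single l 1))
    rw [← mem_range, ← Submodule.Quotient.mk_eq_zero, Submodule.Quotient.mk_sub, sub_eq_zero]
    simpa [g] using hl.symm
  choose x hx using hlift
  have hfx : f ∘ₗ linearCombination R x = linearCombination R y - h ∘ₗ K.mkQ := by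
    ext l
    simp [hx]
  refine ⟨x, fun k hk => ?_⟩
  simpa [(Submodule.Quotient.mk_eq_zero K).mpr hk] using LinearMap.congr_fun hfx k

theorem ReflectsSolvability.exists_solution {f : A →ₗ[R] C} (hf : ReflectsSolvability f)
    {ι : Type u} (K : Submodule R (ι →₀ R)) (hK : K.FG) (y : ι → C)
    (hy : ∀ k ∈ K, linearCombination R y k ∈ range f) :
    ∃ x : ι → A, ∀ k ∈ K, f (linearCombination R x k) = linearCombination R y k := by
  classical
  obtain ⟨G, rfl⟩ := hK
  set s := G.biUnion Finsupp.support
  let e : (s →₀ R) →ₗ[R] ι →₀ R := lmapDomain R R Subtype.val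
  have he : Function.Injective e := mapDomain_injective Subtype.val_injective
  have hKe : Submodule.span R ↑G ≤ range e := by
    rw [range_eq_map, ← supported_univ, lmapDomain_supported, Set.image_univ,
      Subtype.range_coe, Submodule.span_le]
    exact fun g hg => (mem_supported R g).mpr (by simpa using Finset.subset_biUnion_of_mem _ hg)
  have hK' : ((Submodule.span R ↑G).comap e).FG := by
    refine Submodule.fg_of_fg_map_injective e he ?_
    rw [Submodule.map_comap_eq_of_le hKe]
    exact ⟨G, rfl⟩
  obtain ⟨x, hx⟩ := hf s _ hK' (y ∘ Subtype.val) fun k hk => by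
    simpa [e, linearCombination_mapDomain] using hy _ hk
  refine ⟨Function.extend Subtype.val x 0, fun k hk => ?_⟩
  obtain ⟨k, rfl⟩ := hKe hk
  have hext : Function.extend Subtype.val x 0 ∘ Subtype.val = x :=
    funext (Subtype.val_injective.extend_apply x 0)
  simpa [e, linearCombination_mapDomain, hext] using hx k hk

theorem ReflectsSolvability.isPureMono {f : A →ₗ[R] C} (hinj : Function.Injective f)
    (hf : ReflectsSolvability f) : IsPureMono f := by
  refine ⟨hinj, fun F _ _ hF g => ?_⟩
  obtain ⟨S, hS, hker⟩ := hF.out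
  let π := linearCombination R ((↑) : S → F)
  have hπ : Function.Surjective π := by
    rw [← range_eq_top, range_linearCombination, Subtype.range_coe, hS]
  choose y hy using fun l : S => (range f).mkQ_surjective (g l)
  have hyπ : (range f).mkQ ∘ₗ linearCombination R y = g ∘ₗ π := by
    ext l
    simp [π, hy]
  obtain ⟨x, hx⟩ := hf S (ker π) hker y fun k hk => by
    rw [← Submodule.ker_mkQ (range f), mem_ker, ← comp_apply, hyπ, comp_apply, mem_ker.mp hk,
      map_zero]
  let h₀ := linearCombination R y - f ∘ₗ linearCombination R x
  have hh₀ : ker π ≤ ker h₀ := fun k hk => by simp [h₀, hx k hk]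
  refine ⟨(ker π).liftQ h₀ hh₀ ∘ₗ (π.quotKerEquivOfSurjective hπ).symm, ?_⟩
  ext z
  obtain ⟨k, rfl⟩ := hπ z
  simp only [h₀, comp_apply, LinearEquiv.coe_coe, quotKerEquivOfSurjective_symm_apply,
    Submodule.liftQ_apply, LinearMap.sub_apply, map_sub]
  rw [Submodule.mkQ_apply _ (f _), (Submodule.Quotient.mk_eq_zero _).mpr (mem_range_self f _),
    sub_zero]
  exact LinearMap.congr_fun hyπ k

end Solvability

section Separation

variable {R : Type u} [Ring R] {A C : Type u} [AddCommGroup A] [Module R A]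
  [AddCommGroup C] [Module R C]

theorem CharMod.sum_apply_s6 {M : Type u} [AddCommGroup M] {κ : Type*} (s : Finset κ)
    (ψ : κ → CharMod M) (m : M) : (∑ j ∈ s, ψ j) m = ∑ j ∈ s, ψ j m :=
  AddMonoidHom.finsetSum_apply ψ s m

@[simp] theorem CharMod.add_apply {M : Type u} [AddCommGroup M] (ψ ψ' : CharMod M) (m : M) :
    (ψ + ψ') m = ψ m + ψ' m :=
  rfl

@[simp] theorem CharMod.zero_apply {M : Type u} [AddCommGroup M] (m : M) : (0 : CharMod M) m = 0 :=
  rfl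

theorem exists_linearCombination_eq_of_charDual_comp_eq_id {f : A →ₗ[R] C}
    {s : CharMod A →ₗ[Rᵐᵒᵖ] CharMod C} (hs : charDual f ∘ₗ s = LinearMap.id)
    {ι κ : Type*} [Fintype ι] [Fintype κ] (k : κ → ι →₀ R) (a : κ → A) (y : ι → C)
    (hy : ∀ j, f (a j) = linearCombination R y (k j)) :
    ∃ x : ι → A, ∀ j, linearCombination R x (k j) = a j := by
  classical
  have hlc : ∀ {E : Type u} [AddCommGroup E] [Module R E] (z : ι → E) (j : κ),
      linearCombination R z (k j) = ∑ l, k j l • z l := fun z j => by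
    rw [linearCombination_apply, sum_fintype _ _ fun l => zero_smul R (z l)]
  let T : (ι → A) →+ (κ → A) := AddMonoidHom.mk' (fun x j => linearCombination R x (k j))
    fun x x' => funext fun j => by simp [hlc, smul_add, Finset.sum_add_distrib]
  by_contra hno
  have ha : QuotientAddGroup.mk' T.range a ≠ 0 := by
    rw [ne_eq, QuotientAddGroup.mk'_apply, QuotientAddGroup.eq_zero_iff]
    rintro ⟨x, hx⟩
    exact hno ⟨x, fun j => congrFun hx j⟩
  obtain ⟨c, hc⟩ := CharacterModule.exists_character_apply_ne_zero_of_ne_zero ha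
  let χ : κ → CharMod A := fun j =>
    (c.comp (QuotientAddGroup.mk' T.range)).comp (AddMonoidHom.single (fun _ => A) j)
  have hcχ : ∀ v : κ → A, c (QuotientAddGroup.mk' T.range v) = ∑ j, χ j (v j) := fun v => by
    conv_lhs => rw [← Finset.univ_sum_single v]
    simp only [map_sum]
    rfl
  -- `c` vanishes on the image of `T`, i.e. the `χ j` satisfy the transposed system.
  have hχ : ∀ l, ∑ j, op (k j l) • χ j = 0 := fun l => DFunLike.ext _ _ fun a' => by
    have hT : c (QuotientAddGroup.mk' T.range (T (Pi.single l a'))) = 0 := by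
      rw [QuotientAddGroup.mk'_apply,
        (QuotientAddGroup.eq_zero_iff _).mpr (AddMonoidHom.mem_range.mpr ⟨_, rfl⟩), map_zero]
    rw [hcχ] at hT
    rw [CharMod.sum_apply_s6, CharMod.zero_apply]
    simpa [T, hlc, Pi.single_apply] using hT
  have hsχ : ∀ j (a' : A), s (χ j) (f a') = χ j a' := fun j a' =>
    congrArg (fun ψ : CharMod A => ψ a') (LinearMap.congr_fun hs (χ j))
  apply hc
  calc c (QuotientAddGroup.mk' T.range a)
      = ∑ j, s (χ j) (linearCombination R y (k j)) := by simp only [hcχ, ← hy, hsχ]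
    _ = ∑ l, s (∑ j, op (k j l) • χ j) (y l) := by
      simp only [hlc, map_sum, map_smul, CharMod.sum_apply_s6, CharMod.op_smul_apply]
      exact Finset.sum_comm
    _ = 0 := by simp [hχ]

theorem reflectsSolvability_of_charDual_comp_eq_id {f : A →ₗ[R] C}
    {s : CharMod A →ₗ[Rᵐᵒᵖ] CharMod C} (hs : charDual f ∘ₗ s = LinearMap.id) :
    ReflectsSolvability f := by
  intro ι _ K hK y hy
  have := Fintype.ofFinite ι
  obtain ⟨m, k, rfl⟩ := Submodule.fg_iff_exists_fin_generating_family.mp hK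
  choose a ha using fun j => hy (k j) (Submodule.subset_span ⟨j, rfl⟩)
  obtain ⟨x, hx⟩ := exists_linearCombination_eq_of_charDual_comp_eq_id hs k a y ha
  refine ⟨x, fun v hv => ?_⟩
  refine LinearMap.eqOn_span' (f := f ∘ₗ linearCombination R x) (g := linearCombination R y)
    ?_ hv
  rintro _ ⟨j, rfl⟩
  simp [hx, ha]

end Separation
section BalancedTensor

variable {R : Type u} [Ring R] {M : Type u} [AddCommGroup M] [Module R M]
  {P N : Type u} [AddCommGroup P] [Module Rᵐᵒᵖ P] [AddCommGroup N] [Module Rᵐᵒᵖ N]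

variable (R M) in
/-- `(N →₀ M) ⧸ span ℤ (balancingRel R M N)` is the balanced tensor product `N ⊗_R M`
(`TensorProduct` requires commutative scalars). -/
def balancingRel (N : Type u) [AddCommGroup N] [Module Rᵐᵒᵖ N] : Set (N →₀ M) :=
  {t | ∃ (n n' : N) (m : M), t = single (n + n') m - single n m - single n' m} ∪
    {t | ∃ (r : Rᵐᵒᵖ) (n : N) (m : M), t = single (r • n) m - single n (r.unop • m)}

/-- `v` is the linear dependency among elements of `N` that the relation `t` uses; any map
`N → P` respecting it carries `t` to a relation over `P`. -/
theorem exists_finsupp_of_mem_balancingRel {t : N →₀ M} (ht : t ∈ balancingRel R M N) :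
    ∃ v : N →₀ Rᵐᵒᵖ, linearCombination Rᵐᵒᵖ id v = 0 ∧
      ∀ x : N → P, linearCombination Rᵐᵒᵖ x v = 0 → mapDomain x t ∈ balancingRel R M P := by
  rcases ht with ⟨n, n', m, rfl⟩ | ⟨r, n, m, rfl⟩
  · refine ⟨single (n + n') 1 - single n 1 - single n' 1, by simp, fun x hx => Or.inl
      ⟨x n, x n', m, ?_⟩⟩
    have hadd : x (n + n') = x n + x n' := by simpa [sub_sub, sub_eq_zero] using hx
    simp [mapDomain_sub, mapDomain_single, hadd]
  · refine ⟨single (r • n) 1 - single n r, by simp, fun x hx => Or.inr ⟨r, x n, m, ?_⟩⟩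
    simp only [map_sub, linearCombination_single, one_smul] at hx
    simp [mapDomain_sub, mapDomain_single, sub_eq_zero.mp hx]

theorem mapDomain_mem_balancingRel (i : P →ₗ[Rᵐᵒᵖ] N) {t : P →₀ M}
    (ht : t ∈ balancingRel R M P) : mapDomain i t ∈ balancingRel R M N := by
  obtain ⟨v, hv₀, hv⟩ := exists_finsupp_of_mem_balancingRel (P := N) ht
  exact hv i (by rw [← Function.comp_id i, ← apply_linearCombination, hv₀, map_zero])

theorem IsPureMono.mem_span_balancingRel {i : P →ₗ[Rᵐᵒᵖ] N} (hi : IsPureMono i) {u : P →₀ M}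
    (hu : mapDomain i u ∈ Submodule.span ℤ (balancingRel R M N)) :
    u ∈ Submodule.span ℤ (balancingRel R M P) := by
  classical
  obtain ⟨T, hT, huT⟩ := Submodule.mem_span_finite_of_mem_span hu
  choose! v hv₀ hv using fun t (ht : t ∈ T) => exists_finsupp_of_mem_balancingRel (P := P) (hT ht)
  let K := Submodule.span Rᵐᵒᵖ (v '' T ∪ (fun p => single (i p) (1 : Rᵐᵒᵖ)) '' u.support)
  have hK : K.FG :=
    Submodule.fg_span ((T.finite_toSet.image v).union (u.support.finite_toSet.image _))
  -- `x` is a retraction of `i` on the finitely many elements of `N` involved, compatible with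
  -- the relations among them.
  obtain ⟨x, hx⟩ := hi.reflectsSolvability.exists_solution K hK id fun k hk => by
    refine Submodule.span_le (p := (range i).comap (linearCombination Rᵐᵒᵖ id)) |>.mpr ?_ hk
    rintro _ (⟨t, ht, rfl⟩ | ⟨p, -, rfl⟩)
    · simp [hv₀ t ht]
    · simp
  have hxv : ∀ t ∈ T, linearCombination Rᵐᵒᵖ x (v t) = 0 := fun t ht => hi.1 <| by
    rw [hx _ (Submodule.subset_span (Or.inl ⟨t, ht, rfl⟩)), hv₀ t ht, map_zero]
  have hxi : ∀ p ∈ u.support, x (i p) = p := fun p hp => hi.1 <| by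
    simpa using hx _ (Submodule.subset_span (Or.inr ⟨p, hp, rfl⟩))
  have hmap : Submodule.map (lmapDomain M ℤ x) (Submodule.span ℤ T) ≤
      Submodule.span ℤ (balancingRel R M P) := by
    rw [Submodule.map_span_le]
    exact fun t ht => Submodule.subset_span (hv t ht x (hxv t ht))
  have hu' : u = mapDomain x (mapDomain i u) := by
    rw [← mapDomain_comp, mapDomain_congr (f := x ∘ i) (g := id) hxi, mapDomain_id]
  rw [hu']
  exact hmap (Submodule.mem_map_of_mem huT)

end BalancedTensor

section CharModPureInjective

variable {R : Type u} [Ring R] {M : Type u} [AddCommGroup M] [Module R M]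
  {N : Type u} [AddCommGroup N] [Module Rᵐᵒᵖ N]

noncomputable def CharMod.ofBalanced (γ : (N →₀ M) →+ AddCircle (1 : ℚ))
    (hγ : ∀ t ∈ balancingRel R M N, γ t = 0) : N →ₗ[Rᵐᵒᵖ] CharMod M where
  toFun n := γ.comp (singleAddHom n)
  map_add' n n' := AddMonoidHom.ext fun m => by
    have := hγ _ (Or.inl ⟨n, n', m, rfl⟩)
    rw [map_sub, map_sub, sub_sub, sub_eq_zero] at this
    exact this
  map_smul' r n := AddMonoidHom.ext fun m => by
    have := hγ _ (Or.inr ⟨r, n, m, rfl⟩)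
    rw [map_sub, sub_eq_zero] at this
    exact this

theorem liftAddHom_charMod_eq_zero_of_mem_balancingRel (φ : N →ₗ[Rᵐᵒᵖ] CharMod M)
    {t : N →₀ M} (ht : t ∈ balancingRel R M N) :
    liftAddHom (fun n => AddMonoidHomClass.toAddMonoidHom (φ n)) t = 0 := by
  rcases ht with ⟨n, n', m, rfl⟩ | ⟨r, n, m, rfl⟩
  · rw [map_sub, map_sub, liftAddHom_apply_single, liftAddHom_apply_single,
      liftAddHom_apply_single]
    simp
  · rw [map_sub, liftAddHom_apply_single, liftAddHom_apply_single]
    simp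

variable (R M) in
theorem isPureInjective_charMod : IsPureInjective Rᵐᵒᵖ (CharMod M) := by
  intro P N _ _ _ _ i hi φ
  let KP := Submodule.span ℤ (balancingRel R M P)
  let KN := Submodule.span ℤ (balancingRel R M N)
  let j : ((P →₀ M) ⧸ KP) →ₗ[ℤ] (N →₀ M) ⧸ KN := KP.mapQ KN (lmapDomain M ℤ i)
    (Submodule.span_le.mpr fun t ht => Submodule.subset_span (mapDomain_mem_balancingRel i ht))
  have hj : Function.Injective j := by
    refine (injective_iff_map_eq_zero j).mpr fun q hq => ?_
    obtain ⟨u, rfl⟩ := KP.mkQ_surjective q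
    rw [Submodule.mkQ_apply, Submodule.mapQ_apply, Submodule.Quotient.mk_eq_zero] at hq
    exact (Submodule.Quotient.mk_eq_zero _).mpr (hi.mem_span_balancingRel hq)
  let β : ((P →₀ M) ⧸ KP) →ₗ[ℤ] AddCircle (1 : ℚ) :=
    KP.liftQ (liftAddHom fun p => AddMonoidHomClass.toAddMonoidHom (φ p)).toIntLinearMap
      (Submodule.span_le.mpr fun t ht => liftAddHom_charMod_eq_zero_of_mem_balancingRel φ ht)
  obtain ⟨γ, hγ⟩ := CharacterModule.dual_surjective_of_injective j hj β.toAddMonoidHom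
  refine ⟨CharMod.ofBalanced (γ.comp KN.mkQ.toAddMonoidHom) fun t ht => ?_, ?_⟩
  · show γ (KN.mkQ t) = 0
    rw [Submodule.mkQ_apply, (Submodule.Quotient.mk_eq_zero _).mpr (Submodule.subset_span ht),
      map_zero]
  · refine LinearMap.ext fun p => DFunLike.ext _ _ fun m => ?_
    calc γ (KN.mkQ (single (i p) m)) = γ (j (KP.mkQ (single p m))) := by simp [j]
      _ = β (KP.mkQ (single p m)) := DFunLike.congr_fun hγ (KP.mkQ (single p m))
      _ = φ p m := by simp [β]

end CharModPureInjective

theorem stmt6_general {R : Type u} [Ring R] {A C : Type u}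
    [AddCommGroup A] [Module R A] [AddCommGroup C] [Module R C]
    (f : A →ₗ[R] C) (hf : Function.Injective f)
    -- `f⁺` is a precover w.r.t. the class of pure injective right `R`-modules:
    (hfact : ∀ (Y : Type u) [AddCommGroup Y] [Module Rᵐᵒᵖ Y], IsPureInjective Rᵐᵒᵖ Y →
      ∀ g : Y →ₗ[Rᵐᵒᵖ] CharMod A, ∃ h : Y →ₗ[Rᵐᵒᵖ] CharMod C, (charDual f).comp h = g) :
    -- `f` is a pure injective preenvelope of `A`:
    ∀ (X : Type u) [AddCommGroup X] [Module R X], IsPureInjective R X →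
      ∀ g : A →ₗ[R] X, ∃ h : C →ₗ[R] X, h.comp f = g := by
  obtain ⟨s, hs⟩ := hfact (CharMod A) (isPureInjective_charMod R A) LinearMap.id
  have hpure : IsPureMono f := (reflectsSolvability_of_charDual_comp_eq_id hs).isPureMono hf
  intro X _ _ hX g
  exact hX A C f hpure g

/-- **Corollary 3.3 (pure injective version).** If `f : A ↪ C` is a monomorphism of left
`R`-modules with `C` pure injective, and `f⁺ : C⁺ → A⁺` is a precover of `A⁺` with respect
to the class of pure injective right `R`-modules, then `f` is a pure injective preenvelope
of `A`. -/
theorem stmt6 {R : Type u} [Ring R] {A C : Type u}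
    [AddCommGroup A] [Module R A] [AddCommGroup C] [Module R C]
    (hC : IsPureInjective R C) (f : A →ₗ[R] C) (hf : Function.Injective f)
    -- `f⁺` is a precover w.r.t. the class of pure injective right `R`-modules:
    (hdom : IsPureInjective Rᵐᵒᵖ (CharMod C))
    (hfact : ∀ (Y : Type u) [AddCommGroup Y] [Module Rᵐᵒᵖ Y], IsPureInjective Rᵐᵒᵖ Y →
      ∀ g : Y →ₗ[Rᵐᵒᵖ] CharMod A, ∃ h : Y →ₗ[Rᵐᵒᵖ] CharMod C, (charDual f).comp h = g) :
    -- `f` is a pure injective preenvelope of `A`: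
    ∀ (X : Type u) [AddCommGroup X] [Module R X], IsPureInjective R X →
      ∀ g : A →ₗ[R] X, ∃ h : C →ₗ[R] X, h.comp f = g :=
  stmt6_general f hf hfact
end
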